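/- arXiv:1302.2508 — 3 statements merged into one kernel-verified Lean document; each statement's English description precedes it below -/
import Mathlib

section
/- For real numbers q > 0, μ > 0 and ρ ≥ 0, the integral ∫₀^∞ q·e^{-(q t + ρ(1 - e^{-μ t}))} dt equals Kummer's confluent hypergeometric function M(1, q/μ + 1, -ρ), i.e. it equals the convergent series ∑_{n=0}^∞ (-ρ)^n / ∏_{j=1}^{n} (q/μ + j). -/
open MeasureTheory Real Set Finset
open scoped Nat

/-!
Write the integrand as `q e^{-qt} · exp(-ρ s(t))` with `s(t) = 1 - e^{-μt} ∈ [0, 1]`. Expanding the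
exponential and integrating term by term (dominated by `e^{|ρ|} q e^{-qt}`) reduces the claim to the
moments `∫₀^∞ e^{-qt} s(t)^n dt = n! μ^n / ∏_{j=0}^n (q + jμ)`. These follow by induction on `n` from
`s^{n+1} = s^n - e^{-μt} s^n`, which relates the moment of order `n + 1` at `q` to those of order `n`
at `q` and at `q + μ`.
-/

theorem prod_range_add_mul_eq_mul_pow_mul_prod {K : Type*} [Field K] (q μ : K) (hμ : μ ≠ 0)
    (n : ℕ) :
    ∏ j ∈ range (n + 1), (q + j * μ) = q * μ ^ n * ∏ j ∈ Icc 1 n, (q / μ + j) := by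
  rw [prod_range_succ', ← Finset.Ico_add_one_right_eq_Icc, prod_Ico_eq_prod_range,
    Nat.add_sub_cancel, pow_eq_prod_const, mul_assoc, ← prod_mul_distrib, Nat.cast_zero, zero_mul,
    add_zero, mul_comm]
  congr 1
  refine prod_congr rfl fun j _ => ?_
  field_simp
  push_cast
  ring

theorem integral_exp_neg_mul_Ioi_zero {c : ℝ} (hc : 0 < c) :
    ∫ t in Ioi (0 : ℝ), exp (-c * t) = 1 / c := by
  rw [integral_exp_mul_Ioi (neg_neg_of_pos hc)]
  field_simp
  simp

theorem one_sub_exp_neg_mul_mem_Icc {μ t : ℝ} (hμ : 0 ≤ μ) (ht : 0 ≤ t) :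
    1 - exp (-μ * t) ∈ Set.Icc 0 1 := by
  constructor
  · have : exp (-μ * t) ≤ 1 := exp_le_one_iff.2 (by nlinarith)
    linarith
  · linarith [exp_pos (-μ * t)]

theorem integrableOn_exp_neg_mul_mul_one_sub_exp_pow {q μ : ℝ} (hq : 0 < q) (hμ : 0 ≤ μ)
    (n : ℕ) :
    IntegrableOn (fun t => exp (-q * t) * (1 - exp (-μ * t)) ^ n) (Ioi 0) := by
  refine Integrable.mono' (exp_neg_integrableOn_Ioi 0 hq) (by fun_prop) ?_
  filter_upwards [ae_restrict_mem measurableSet_Ioi] with t ht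
  obtain ⟨h0, h1⟩ := one_sub_exp_neg_mul_mem_Icc hμ ht.le
  rw [norm_mul, norm_of_nonneg (exp_pos _).le, norm_pow, norm_of_nonneg h0, neg_mul]
  exact mul_le_of_le_one_right (exp_pos _).le (pow_le_one₀ h0 h1)

theorem integral_exp_neg_mul_mul_one_sub_exp_pow {q μ : ℝ} (hq : 0 < q) (hμ : 0 ≤ μ) (n : ℕ) :
    ∫ t in Ioi (0 : ℝ), exp (-q * t) * (1 - exp (-μ * t)) ^ n
      = n ! * μ ^ n / ∏ j ∈ range (n + 1), (q + j * μ) := by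
  induction n generalizing q with
  | zero => simpa using integral_exp_neg_mul_Ioi_zero hq
  | succ n ih =>
    have hqμ : 0 < q + μ := by linarith
    have step : ∫ t in Ioi (0 : ℝ), exp (-q * t) * (1 - exp (-μ * t)) ^ (n + 1)
        = (∫ t in Ioi (0 : ℝ), exp (-q * t) * (1 - exp (-μ * t)) ^ n)
          - ∫ t in Ioi (0 : ℝ), exp (-(q + μ) * t) * (1 - exp (-μ * t)) ^ n := by
      rw [← integral_sub (integrableOn_exp_neg_mul_mul_one_sub_exp_pow hq hμ n)
        (integrableOn_exp_neg_mul_mul_one_sub_exp_pow hqμ hμ n)]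
      congr 1 with t
      simp only [pow_succ, neg_add, add_mul, exp_add]
      ring
    have hP : ∀ p, 0 < p → 0 < ∏ j ∈ range (n + 1), (p + j * μ) := fun p hp =>
      prod_pos fun j _ => by positivity
    have hlast : ∏ j ∈ range (n + 2), (q + j * μ)
        = (∏ j ∈ range (n + 1), (q + j * μ)) * (q + (n + 1) * μ) := by
      rw [prod_range_succ]
      push_cast
      ring
    have hfirst : ∏ j ∈ range (n + 2), (q + j * μ)
        = q * ∏ j ∈ range (n + 1), (q + μ + j * μ) := by
      rw [prod_range_succ', mul_comm]
      push_cast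
      simp only [add_mul, one_mul, add_assoc, add_comm μ]
      simp
    rw [step, ih hq, ih hqμ, div_sub_div _ _ (hP q hq).ne' (hP _ hqμ).ne',
      div_eq_div_iff (by positivity) (by positivity), Nat.factorial_succ]
    push_cast
    linear_combination (n ! * μ ^ n * ∏ j ∈ range (n + 1), (q + μ + j * μ)) * hlast
      - (n ! * μ ^ n * ∏ j ∈ range (n + 1), (q + j * μ)) * hfirst

theorem integral_mul_exp_neg_mul_mul_one_sub_exp_pow {q μ : ℝ} (hq : 0 < q) (hμ : 0 < μ)
    (n : ℕ) :
    ∫ t in Ioi (0 : ℝ), q * exp (-q * t) * (1 - exp (-μ * t)) ^ n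
      = n ! / ∏ j ∈ Icc 1 n, (q / μ + j) := by
  simp_rw [mul_assoc]
  rw [integral_const_mul, integral_exp_neg_mul_mul_one_sub_exp_pow hq hμ.le,
    prod_range_add_mul_eq_mul_pow_mul_prod q μ hμ.ne']
  have : 0 < ∏ j ∈ Icc 1 n, (q / μ + j) := prod_pos fun j _ => by positivity
  field_simp

theorem hasSum_integral_mul_exp_mul {α : Type*} [MeasurableSpace α] {ν : Measure α}
    {g s : α → ℝ} {C : ℝ} (hg : Integrable g ν) (hs : AEStronglyMeasurable s ν)
    (hsC : ∀ᵐ x ∂ν, |s x| ≤ C) (c : ℝ) :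
    HasSum (fun n : ℕ => c ^ n / n ! * ∫ x, g x * s x ^ n ∂ν) (∫ x, g x * exp (c * s x) ∂ν) := by
  simp_rw [← integral_const_mul]
  refine hasSum_integral_of_dominated_convergence (fun n x => (|c| * C) ^ n / n ! * |g x|)
    (fun n => (hg.aestronglyMeasurable.mul (hs.pow n)).const_mul _) (fun n => ?_)
    (Filter.Eventually.of_forall fun x => (summable_pow_div_factorial _).mul_right _) ?_
    (Filter.Eventually.of_forall fun x => ?_)
  · filter_upwards [hsC] with x hx
    simp only [norm_mul, norm_div, norm_pow, RCLike.norm_natCast, norm_eq_abs]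
    calc |c| ^ n / n ! * (|g x| * |s x| ^ n) = |c| ^ n / n ! * |g x| * |s x| ^ n := by ring
      _ ≤ |c| ^ n / n ! * |g x| * C ^ n := by gcongr
      _ = (|c| * C) ^ n / n ! * |g x| := by ring
  · simp_rw [tsum_mul_right]
    exact hg.norm.const_mul _
  · have hsum := (NormedSpace.expSeries_div_hasSum_exp (c * s x)).mul_left (g x)
    rw [← exp_eq_exp_ℝ] at hsum
    refine (funext fun n => ?_ : (fun n : ℕ => c ^ n / n ! * (g x * s x ^ n)) = _) ▸ hsum
    ring

theorem stmt_0_general (q μ ρ : ℝ) (hq : 0 < q) (hμ : 0 < μ) :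
    ∫ t in Set.Ioi (0 : ℝ), q * Real.exp (-(q * t + ρ * (1 - Real.exp (-μ * t))))
      = ∑' n : ℕ, (-ρ) ^ n / ∏ j ∈ Finset.Icc 1 n, (q / μ + (j : ℝ)) := by
  have hbound : ∀ᵐ t ∂volume.restrict (Ioi (0 : ℝ)), |1 - exp (-μ * t)| ≤ 1 := by
    filter_upwards [ae_restrict_mem measurableSet_Ioi] with t ht
    obtain ⟨h0, h1⟩ := one_sub_exp_neg_mul_mem_Icc hμ.le ht.le
    rwa [abs_of_nonneg h0]
  have hexp := hasSum_integral_mul_exp_mul ((exp_neg_integrableOn_Ioi 0 hq).const_mul q)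
    (by fun_prop) hbound (-ρ)
  have hcoeff (n : ℕ) : (-ρ) ^ n / n ! * (n ! / ∏ j ∈ Icc 1 n, (q / μ + j))
      = (-ρ) ^ n / ∏ j ∈ Icc 1 n, (q / μ + j) := by
    field_simp
  simp only [integral_mul_exp_neg_mul_mul_one_sub_exp_pow hq hμ, hcoeff] at hexp
  rw [hexp.tsum_eq]
  congr 1 with t
  rw [mul_assoc, ← exp_add]
  ring_nf

/-- For `q > 0`, `μ > 0`, `ρ ≥ 0`, the integral
`∫₀^∞ q e^{-(qt + ρ(1 - e^{-μt}))} dt` equals Kummer's function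
`M(1, q/μ + 1, -ρ) = ∑ₙ (-ρ)ⁿ / ∏_{j=1}^n (q/μ + j)`. -/
theorem stmt_0 (q μ ρ : ℝ) (hq : 0 < q) (hμ : 0 < μ) (hρ : 0 ≤ ρ) :
    ∫ t in Set.Ioi (0 : ℝ), q * Real.exp (-(q * t + ρ * (1 - Real.exp (-μ * t))))
      = ∑' n : ℕ, (-ρ) ^ n / ∏ j ∈ Finset.Icc 1 n, (q / μ + (j : ℝ)) :=
  stmt_0_general q μ ρ hq hμ
end

section
/- Let X : [0,∞) → ℝ be a continuous function with X(0) = x ≥ 0, and define the reflected path R(t) = X(t) - inf_{0 ≤ s ≤ t} min(X(s), 0). Then for every t ≥ 0, R(t) - inf_{0 ≤ s ≤ t} R(s) = X(t) - inf_{0 ≤ s ≤ t} X(s). -/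
/-!
With `I t = inf_{[0,t]} X`, the reflection is `R = X - min I 0`, and `inf_{[0,t]} R = max (I t) 0`:
every value of `R` on `[0,t]` is at least both `X s - I s ≥ 0` and `X s ≥ I t`, and at a minimiser
`w` of `X` on `[0,t]` one has `I w = X w = I t`, so `R w = max (I t) 0`.
Since `min (I t) 0 + max (I t) 0 = I t`, the identity follows.
-/

open Set

theorem csInf_image_min_const {α : Type*} {f : α → ℝ} {s : Set α} (hs : s.Nonempty)
    (hbdd : BddBelow (f '' s)) (c : ℝ) :
    sInf ((fun a => min (f a) c) '' s) = min (sInf (f '' s)) c := by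
  rw [Monotone.map_csInf_of_continuousAt (f := fun y => min y c)
    (continuous_id.min continuous_const).continuousAt (fun _ _ h => min_le_min_right c h)
    (hs.image f) hbdd, image_image]

section RunningInf

variable {X : ℝ → ℝ} {t w : ℝ}

theorem isLeast_image_Icc_of_isMinOn (hmin : IsMinOn X (Icc 0 t) w) (hw : 0 ≤ w) {s : ℝ}
    (hws : w ≤ s) (hst : s ≤ t) : IsLeast (X '' Icc 0 s) (X w) :=
  ⟨mem_image_of_mem X ⟨hw, hws⟩, forall_mem_image.2 fun _ hu => hmin ⟨hu.1, hu.2.trans hst⟩⟩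

theorem csInf_image_Icc_mem_Icc_of_isMinOn (hmin : IsMinOn X (Icc 0 t) w) {s : ℝ}
    (hs : s ∈ Icc 0 t) :
    sInf (X '' Icc 0 s) ∈ Icc (X w) (X s) := by
  have hlower : X w ∈ lowerBounds (X '' Icc 0 s) :=
    forall_mem_image.2 fun _ hu => hmin ⟨hu.1, hu.2.trans hs.2⟩
  exact ⟨le_csInf ((nonempty_Icc.2 hs.1).image X) hlower,
    csInf_le ⟨X w, hlower⟩ (mem_image_of_mem X ⟨hs.1, le_rfl⟩)⟩

theorem isLeast_reflection_image (hX : ContinuousOn X (Icc 0 t)) (ht : 0 ≤ t) :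
    IsLeast ((fun s => X s - min (sInf (X '' Icc 0 s)) 0) '' Icc 0 t)
      (max (sInf (X '' Icc 0 t)) 0) := by
  obtain ⟨w, hw, hmin⟩ := isCompact_Icc.exists_isMinOn (nonempty_Icc.2 ht) hX
  have hIw : sInf (X '' Icc 0 w) = X w :=
    (isLeast_image_Icc_of_isMinOn hmin hw.1 le_rfl hw.2).csInf_eq
  have hIt : sInf (X '' Icc 0 t) = X w :=
    (isLeast_image_Icc_of_isMinOn hmin hw.1 hw.2 le_rfl).csInf_eq
  refine ⟨⟨w, hw, ?_⟩, forall_mem_image.2 fun s hs => ?_⟩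
  · simp only [hIw, hIt]
    rw [sub_eq_iff_eq_add, max_add_min, add_zero]
  · obtain ⟨hwI, hIX⟩ := csInf_image_Icc_mem_Icc_of_isMinOn hmin hs
    rw [hIt]
    exact max_le (by linarith [min_le_right (sInf (X '' Icc 0 s)) 0])
      (by linarith [min_le_left (sInf (X '' Icc 0 s)) 0])

end RunningInf

theorem stmt_2_general (X : ℝ → ℝ) (hX : ContinuousOn X (Set.Ici 0))
    (R : ℝ → ℝ)
    (hR : ∀ t, R t = X t - sInf ((fun s => min (X s) 0) '' Set.Icc 0 t)) :
    ∀ t ≥ (0 : ℝ), R t - sInf (R '' Set.Icc 0 t) = X t - sInf (X '' Set.Icc 0 t) := by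
  intro t ht
  have hR' : ∀ s ∈ Icc 0 t, R s = X s - min (sInf (X '' Icc 0 s)) 0 := fun s hs => by
    rw [hR, csInf_image_min_const (nonempty_Icc.2 hs.1) (isCompact_Icc.image_of_continuousOn
      (hX.mono Icc_subset_Ici_self)).bddBelow]
  rw [hR' t ⟨ht, le_rfl⟩, image_congr hR',
    (isLeast_reflection_image (hX.mono Icc_subset_Ici_self) ht).csInf_eq]
  linarith [min_add_max (sInf (X '' Icc 0 t)) 0]

/-- for a continuous path `X` with `X 0 = x ≥ 0` and its one-sided Skorokhod
reflection `R t = X t - inf_{0≤s≤t} min (X s) 0`, one has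
`R t - inf_{0≤s≤t} R s = X t - inf_{0≤s≤t} X s` for all `t ≥ 0`. -/
theorem stmt_2 (X : ℝ → ℝ) (hX : ContinuousOn X (Set.Ici 0))
    (x : ℝ) (hx : 0 ≤ x) (hX0 : X 0 = x)
    (R : ℝ → ℝ)
    (hR : ∀ t, R t = X t - sInf ((fun s => min (X s) 0) '' Set.Icc 0 t)) :
    ∀ t ≥ (0 : ℝ), R t - sInf (R '' Set.Icc 0 t) = X t - sInf (X '' Set.Icc 0 t) :=
  stmt_2_general X hX R hR
end

section
/- Let X : [0,∞) → ℝ be a continuous function with X(0) = x ≥ 0, and define R(t) = X(t) - inf_{0 ≤ s ≤ t} min(X(s), 0). Then for every t ≥ 0, inf_{0 ≤ s ≤ t} R(s) = max(inf_{0 ≤ s ≤ t} X(s), 0). -/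
/-- for a continuous path `X` with `X 0 = x ≥ 0` and its one-sided Skorokhod
reflection `R t = X t - inf_{0≤s≤t} min (X s) 0`, one has
`inf_{0≤s≤t} R s = max (inf_{0≤s≤t} X s) 0` for all `t ≥ 0`. -/
theorem stmt_3 (X : ℝ → ℝ) (hX : ContinuousOn X (Set.Ici 0))
    (x : ℝ) (hx : 0 ≤ x) (hX0 : X 0 = x)
    (R : ℝ → ℝ)
    (hR : ∀ t, R t = X t - sInf ((fun s => min (X s) 0) '' Set.Icc 0 t)) :
    ∀ t ≥ (0 : ℝ), sInf (R '' Set.Icc 0 t) = max (sInf (X '' Set.Icc 0 t)) 0 := by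
  intro t ht
  have hKne : (Set.Icc (0:ℝ) t).Nonempty := ⟨0, le_refl 0, ht⟩
  have hXc : ContinuousOn X (Set.Icc 0 t) := hX.mono (fun u hu => hu.1)
  have hbdd : BddBelow (X '' Set.Icc 0 t) :=
    (isCompact_Icc.image_of_continuousOn hXc).bddBelow
  have hne : (X '' Set.Icc 0 t).Nonempty := hKne.image X
  obtain ⟨s, hs, hmin⟩ := isCompact_Icc.exists_isMinOn hKne hXc
  have hminall : ∀ u ∈ Set.Icc (0:ℝ) t, X s ≤ X u := fun u hu => hmin hu
  have hXs : X s = sInf (X '' Set.Icc 0 t) := by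
    apply le_antisymm
    · apply le_csInf hne
      rintro y ⟨u, hu, rfl⟩
      exact hminall u hu
    · exact csInf_le hbdd ⟨s, hs, rfl⟩
  rcases le_or_gt 0 (sInf (X '' Set.Icc 0 t)) with h0 | h0
  · -- Case A : inf X ≥ 0
    have hXnn : ∀ u ∈ Set.Icc (0:ℝ) t, 0 ≤ X u := fun u hu =>
      h0.trans (csInf_le hbdd ⟨u, hu, rfl⟩)
    have hReq : ∀ u ∈ Set.Icc (0:ℝ) t, R u = X u := by
      intro u hu
      have hsub : Set.Icc (0:ℝ) u ⊆ Set.Icc 0 t :=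
        Set.Icc_subset_Icc le_rfl hu.2
      have h1 : sInf ((fun v => min (X v) 0) '' Set.Icc 0 u) = 0 := by
        have hall : ∀ y ∈ (fun v => min (X v) 0) '' Set.Icc 0 u, y = 0 := by
          rintro y ⟨v, hv, rfl⟩
          exact min_eq_right (hXnn v (hsub hv))
        have hmem : (0:ℝ) ∈ (fun v => min (X v) 0) '' Set.Icc 0 u :=
          ⟨0, ⟨le_refl 0, hu.1⟩, by simp [hX0, min_eq_right hx]⟩
        apply le_antisymm
        · exact csInf_le ⟨0, fun y hy => (hall y hy).ge⟩ hmem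
        · exact le_csInf ⟨0, hmem⟩ (fun y hy => (hall y hy).ge)
      rw [hR u, h1, sub_zero]
    have himg : R '' Set.Icc 0 t = X '' Set.Icc 0 t := by
      apply Set.image_congr hReq
    rw [himg, max_eq_left h0]
  · -- Case B : inf X < 0
    have hXsneg : X s < 0 := hXs ▸ h0
    have hRnn : ∀ u ∈ Set.Icc (0:ℝ) t, 0 ≤ R u := by
      intro u hu
      have hsub : Set.Icc (0:ℝ) u ⊆ Set.Icc 0 t :=
        Set.Icc_subset_Icc le_rfl hu.2
      have hb : BddBelow ((fun v => min (X v) 0) '' Set.Icc 0 u) := by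
        refine ⟨X s, ?_⟩
        rintro y ⟨v, hv, rfl⟩
        exact le_min (hminall v (hsub hv)) hXsneg.le
      have h1 : sInf ((fun v => min (X v) 0) '' Set.Icc 0 u) ≤ X u := by
        calc sInf ((fun v => min (X v) 0) '' Set.Icc 0 u) ≤ min (X u) 0 :=
              csInf_le hb ⟨u, ⟨hu.1, le_rfl⟩, rfl⟩
          _ ≤ X u := min_le_left _ _
      rw [hR u]
      linarith
    have hRs : R s = 0 := by
      have hsub : Set.Icc (0:ℝ) s ⊆ Set.Icc 0 t :=
        Set.Icc_subset_Icc le_rfl hs.2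
      have hb : BddBelow ((fun v => min (X v) 0) '' Set.Icc 0 s) := by
        refine ⟨X s, ?_⟩
        rintro y ⟨v, hv, rfl⟩
        exact le_min (hminall v (hsub hv)) hXsneg.le
      have h1 : sInf ((fun v => min (X v) 0) '' Set.Icc 0 s) = X s := by
        apply le_antisymm
        · have : min (X s) 0 = X s := min_eq_left hXsneg.le
          exact this ▸ csInf_le hb ⟨s, ⟨hs.1, le_rfl⟩, rfl⟩
        · refine le_csInf ⟨min (X s) 0, s, ⟨hs.1, le_rfl⟩, rfl⟩ ?_
          rintro y ⟨v, hv, rfl⟩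
          exact le_min (hminall v (hsub hv)) hXsneg.le
      rw [hR s, h1, sub_self]
    rw [max_eq_right h0.le]
    apply le_antisymm
    · exact csInf_le ⟨0, by rintro y ⟨u, hu, rfl⟩; exact hRnn u hu⟩ ⟨s, hs, hRs⟩
    · apply le_csInf (hKne.image R)
      rintro y ⟨u, hu, rfl⟩
      exact hRnn u hu
end
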